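/- For every real number p with 0 ≤ p ≤ 1 and all natural numbers n ≥ 1 and k ≤ n, one has C(n,k) · p^k · (1−p)^{n−k} ≤ exp(−2·n·(p − k/n)²). -/

import Mathlib

/-!
Chernoff's method: the single term `C(n,k) (p eᵗ)ᵏ (1-p)ⁿ⁻ᵏ` of the binomial expansion is at most
`(1 - p + p eᵗ)ⁿ`, and Hoeffding's lemma for a Bernoulli variable bounds `1 - p + p eᵗ` by
`exp (t p + t²/8)`. Optimising the resulting bound `exp (n (t p + t²/8) - t k)` at
`t = 4 (k/n - p)` gives `exp (-2 n (p - k/n)²)`.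
-/

open Real MeasureTheory ProbabilityTheory

theorem one_sub_add_mul_exp_le {p : ℝ} (hp0 : 0 ≤ p) (hp1 : p ≤ 1) (t : ℝ) :
    1 - p + p * exp t ≤ exp (t * p + t ^ 2 / 8) := by
  set μ : Measure ℝ := bernoulliMeasure 1 0 ⟨p, hp0, hp1⟩
  have hsupp : ∀ᵐ x ∂μ, x ∈ Set.Icc (0 : ℝ) 1 := by
    rw [ae_iff]
    exact bernoulliMeasure_apply_of_notMem_of_notMem _ measurableSet_Icc.compl
      (by simp) (by simp)
  have hcentered : p * exp (t * (1 - p)) + (1 - p) * exp (-(t * p)) ≤ exp (t ^ 2 / 8) := by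
    have h := (hasSubgaussianMGF_of_mem_Icc aemeasurable_id hsupp).mgf_le t
    simp only [mgf, integral_bernoulliMeasure, μ, id, smul_eq_mul, mul_one, mul_zero, add_zero,
      sub_zero, zero_sub, mul_neg] at h
    refine h.trans_eq (congrArg exp ?_)
    norm_num
    ring
  have hone : exp (t * p) * exp (t * (1 - p)) = exp t := by rw [← exp_add]; ring_nf
  have hzero : exp (t * p) * exp (-(t * p)) = 1 := by rw [← exp_add, add_neg_cancel, exp_zero]
  calc 1 - p + p * exp t
      = exp (t * p) * (p * exp (t * (1 - p)) + (1 - p) * exp (-(t * p))) := by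
        linear_combination (-p) * hone - (1 - p) * hzero
    _ ≤ exp (t * p) * exp (t ^ 2 / 8) := by gcongr
    _ = exp (t * p + t ^ 2 / 8) := (exp_add _ _).symm

theorem choose_mul_pow_mul_pow_le_add_pow {R : Type*} [CommSemiring R] [PartialOrder R]
    [IsOrderedRing R] {x y : R} (hx : 0 ≤ x) (hy : 0 ≤ y) (n k : ℕ) :
    n.choose k * x ^ k * y ^ (n - k) ≤ (x + y) ^ n := by
  rcases le_or_gt k n with hk | hk
  · calc (n.choose k : R) * x ^ k * y ^ (n - k) = x ^ k * y ^ (n - k) * n.choose k := by ring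
      _ ≤ ∑ m ∈ Finset.range (n + 1), x ^ m * y ^ (n - m) * n.choose m :=
        Finset.single_le_sum (f := fun m ↦ x ^ m * y ^ (n - m) * n.choose m)
          (fun m _ ↦ by positivity) (Finset.mem_range_succ_iff.mpr hk)
      _ = (x + y) ^ n := (add_pow x y n).symm
  · rw [Nat.choose_eq_zero_of_lt hk, Nat.cast_zero, zero_mul, zero_mul]
    positivity

theorem choose_mul_pow_mul_one_sub_pow_le_exp {p : ℝ} (hp0 : 0 ≤ p) (hp1 : p ≤ 1) (n k : ℕ)
    (t : ℝ) : n.choose k * p ^ k * (1 - p) ^ (n - k) ≤ exp (n * (t * p + t ^ 2 / 8) - t * k) := by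
  have hmgf : n.choose k * (p * exp t) ^ k * (1 - p) ^ (n - k) ≤ exp (n * (t * p + t ^ 2 / 8)) :=
    calc _ ≤ (p * exp t + (1 - p)) ^ n :=
          choose_mul_pow_mul_pow_le_add_pow (by positivity) (sub_nonneg.mpr hp1) n k
      _ ≤ exp (t * p + t ^ 2 / 8) ^ n := by
          gcongr
          linarith [one_sub_add_mul_exp_le hp0 hp1 t]
      _ = exp (n * (t * p + t ^ 2 / 8)) := (exp_nat_mul _ n).symm
  rw [exp_sub, le_div_iff₀ (exp_pos _)]
  calc _ = n.choose k * (p * exp t) ^ k * (1 - p) ^ (n - k) := by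
        rw [mul_pow, ← exp_nat_mul, mul_comm t]; ring
    _ ≤ _ := hmgf

theorem binomial_point_mass_le_exp_general (p : ℝ) (hp0 : 0 ≤ p) (hp1 : p ≤ 1)
    (n k : ℕ) (hn : 1 ≤ n) :
    (n.choose k : ℝ) * p ^ k * (1 - p) ^ (n - k) ≤
      Real.exp (-2 * n * (p - (k : ℝ) / n) ^ 2) := by
  set s : ℝ := k / n
  have hk : (k : ℝ) = n * s :=
    (mul_div_cancel₀ _ (Nat.cast_ne_zero.mpr (Nat.one_le_iff_ne_zero.mp hn))).symm
  refine (choose_mul_pow_mul_one_sub_pow_le_exp hp0 hp1 n k (4 * (s - p))).trans_eq ?_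
  rw [hk]
  congr 1
  ring

/-- For every real `p` with `0 ≤ p ≤ 1` and all natural numbers `n ≥ 1`
and `k ≤ n`, one has `C(n,k) · p^k · (1−p)^(n−k) ≤ exp(−2·n·(p − k/n)²)`. -/
theorem binomial_point_mass_le_exp (p : ℝ) (hp0 : 0 ≤ p) (hp1 : p ≤ 1)
    (n k : ℕ) (hn : 1 ≤ n) (hk : k ≤ n) :
    (n.choose k : ℝ) * p ^ k * (1 - p) ^ (n - k) ≤
      Real.exp (-2 * n * (p - (k : ℝ) / n) ^ 2) :=
  binomial_point_mass_le_exp_general p hp0 hp1 n k hn
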